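/- Fix z₁ ∈ ℝⁿ and let Q_{z₁} = { z₁ + w : w ∈ (0,∞)ⁿ }. Let G be a closed convex subset of ℝⁿ whose intersection with Q_{z₁} is nonempty and bounded. Then there is a vector v ∈ (0,∞)ⁿ that is normal to G at some point z ∈ G ∩ Q_{z₁}, i.e., ⟨v, w⟩ ≤ ⟨v, z⟩ for all w ∈ G. -/
import Mathlib


open Filter Topology

private lemma log_lb (u : ℝ) (hu : -2⁻¹ ≤ u) : u - 2*u^2 ≤ Real.log (1+u) := by
  have h0 : (0:ℝ) < 1 + u := by linarith
  have h1 : Real.log (1+u)⁻¹ ≤ (1+u)⁻¹ - 1 := Real.log_le_sub_one_of_pos (by positivity)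
  rw [Real.log_inv] at h1
  have h2 : (1+u) * (1+u)⁻¹ = 1 := mul_inv_cancel₀ h0.ne'
  nlinarith [sq_nonneg u, mul_nonneg (sq_nonneg u) h0.le]

set_option maxHeartbeats 1000000 in
theorem stmt9 (n : ℕ) (hn : 1 ≤ n) (z₁ : Fin n → ℝ)
    (G : Set (Fin n → ℝ)) (hGclosed : IsClosed G) (hGconv : Convex ℝ G)
    (hne : (G ∩ {y | ∀ i, z₁ i < y i}).Nonempty)
    (hbd : Bornology.IsBounded (G ∩ {y | ∀ i, z₁ i < y i})) :
    ∃ (v : Fin n → ℝ) (z : Fin n → ℝ),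
      (∀ i, 0 < v i) ∧ z ∈ G ∩ {y | ∀ i, z₁ i < y i} ∧
      ∀ w ∈ G, ∑ i, v i * w i ≤ ∑ i, v i * z i := by
  obtain ⟨z₀, hz₀G, hz₀Q⟩ := hne
  obtain ⟨R, hR⟩ := isBounded_iff_forall_norm_le.mp hbd
  set M : ℝ := max R 0 + ‖z₁‖ + 1 with hMdef
  have hM0 : 0 < M := by positivity
  have hbound : ∀ w ∈ G ∩ {y | ∀ i, z₁ i < y i}, ∀ i, w i - z₁ i ≤ M := by
    intro w hw i
    have h1 : ‖w‖ ≤ R := hR w hw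
    have h2 : |w i| ≤ ‖w‖ := by
      simpa using norm_le_pi_norm w i
    have h3 : |z₁ i| ≤ ‖z₁‖ := by
      simpa using norm_le_pi_norm z₁ i
    have h4 := abs_le.mp h2
    have h5 := abs_le.mp h3
    have : R ≤ max R 0 := le_max_left _ _
    simp only [hMdef]; linarith
  set φ : (Fin n → ℝ) → ℝ := fun w => ∑ i, Real.log (w i - z₁ i) with hφdef
  set c : ℝ := φ z₀ with hcdef
  set δ : ℝ := Real.exp c / M ^ (n-1) with hδdef
  have hδ0 : 0 < δ := by positivity
  have lemA : ∀ w ∈ G ∩ {y | ∀ i, z₁ i < y i}, c ≤ φ w → ∀ i, δ ≤ w i - z₁ i := by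
    intro w hw hcw i
    have hpos : ∀ j, 0 < w j - z₁ j := fun j => sub_pos.mpr (hw.2 j)
    have hprod : Real.exp (φ w) = ∏ j, (w j - z₁ j) := by
      rw [hφdef, Real.exp_sum]
      exact Finset.prod_congr rfl (fun j _ => Real.exp_log (hpos j))
    have h1 : Real.exp c ≤ ∏ j, (w j - z₁ j) := by
      rw [← hprod]; exact Real.exp_le_exp.mpr hcw
    have h2 : ∏ j, (w j - z₁ j)
        = (w i - z₁ i) * ∏ j ∈ Finset.univ.erase i, (w j - z₁ j) :=
      (Finset.mul_prod_erase _ _ (Finset.mem_univ i)).symm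
    have h3 : ∏ j ∈ Finset.univ.erase i, (w j - z₁ j) ≤ M ^ (n-1) := by
      calc ∏ j ∈ Finset.univ.erase i, (w j - z₁ j)
          ≤ ∏ j ∈ Finset.univ.erase i, M :=
            Finset.prod_le_prod (fun j _ => (hpos j).le) (fun j _ => hbound w hw j)
        _ = M ^ (n-1) := by
            rw [Finset.prod_const, Finset.card_erase_of_mem (Finset.mem_univ i),
              Finset.card_univ, Fintype.card_fin]
    have hMpow : 0 < M ^ (n-1) := pow_pos hM0 _
    rw [hδdef, div_le_iff₀ hMpow]
    calc Real.exp c ≤ ∏ j, (w j - z₁ j) := h1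
      _ = (w i - z₁ i) * ∏ j ∈ Finset.univ.erase i, (w j - z₁ j) := h2
      _ ≤ (w i - z₁ i) * M ^ (n-1) :=
          mul_le_mul_of_nonneg_left h3 (hpos i).le
  set K : Set (Fin n → ℝ) := G ∩ {w | ∀ i, z₁ i + δ ≤ w i} with hKdef
  have hKQ : K ⊆ G ∩ {y | ∀ i, z₁ i < y i} := by
    intro w hw
    exact ⟨hw.1, fun i => lt_of_lt_of_le (by linarith : z₁ i < z₁ i + δ) (hw.2 i)⟩
  have hKclosed : IsClosed K := by
    apply hGclosed.inter
    have : {w : Fin n → ℝ | ∀ i, z₁ i + δ ≤ w i} = ⋂ i, {w | z₁ i + δ ≤ w i} := by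
      ext x; simp [Set.mem_iInter]
    rw [this]
    exact isClosed_iInter fun i => isClosed_le continuous_const (continuous_apply i)
  have hKcpt : IsCompact K :=
    Metric.isCompact_of_isClosed_isBounded hKclosed (hbd.subset hKQ)
  have hz₀K : z₀ ∈ K :=
    ⟨hz₀G, fun i => by linarith [lemA z₀ ⟨hz₀G, hz₀Q⟩ le_rfl i]⟩
  have hφcont : ContinuousOn φ K := by
    apply continuousOn_finset_sum
    intro i _
    intro x hx
    have hne' : x i - z₁ i ≠ 0 := by
      have h1 := hx.2 i
      intro h
      have : x i = z₁ i := by linarith [sub_eq_zero.mp h]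
      linarith
    exact ((((continuous_apply i).sub
      (continuous_const : Continuous fun _ : Fin n → ℝ => z₁ i)).continuousAt).log
      hne').continuousWithinAt
  obtain ⟨z, hzK, hzmax⟩ := hKcpt.exists_isMaxOn ⟨z₀, hz₀K⟩ hφcont
  have hzQ : z ∈ G ∩ {y | ∀ i, z₁ i < y i} := hKQ hzK
  have hzpos : ∀ i, 0 < z i - z₁ i := fun i => sub_pos.mpr (hzQ.2 i)
  have hmax : ∀ w ∈ G ∩ {y | ∀ i, z₁ i < y i}, φ w ≤ φ z := by
    intro w hw
    by_cases h : c ≤ φ w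
    · exact hzmax ⟨hw.1, fun i => by linarith [lemA w hw h i]⟩
    · push_neg at h
      exact le_trans h.le (hzmax hz₀K)
  refine ⟨fun i => (z i - z₁ i)⁻¹, z, fun i => inv_pos.mpr (hzpos i), hzQ, ?_⟩
  intro w hw
  set a : Fin n → ℝ := fun i => (z i - z₁ i)⁻¹ * (w i - z i) with hadef
  set S : ℝ := ∑ i, a i with hSdef
  set B : ℝ := ∑ i, (a i)^2 with hBdef
  set A : ℝ := ∑ i, |a i| with hAdef
  have hA0 : 0 ≤ A := Finset.sum_nonneg fun i _ => abs_nonneg _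
  have hB0 : 0 ≤ B := Finset.sum_nonneg fun i _ => sq_nonneg _
  have haA : ∀ i, |a i| ≤ A :=
    fun i => Finset.single_le_sum (fun j _ => abs_nonneg (a j)) (Finset.mem_univ i)
  -- key claim
  have key : ∀ t : ℝ, 0 < t → t ≤ 1 → (∀ i, |t * a i| ≤ 2⁻¹) → S ≤ 2 * t * B := by
    intro t ht0 ht1 hta
    set y : Fin n → ℝ := (1 - t) • z + t • w with hydef
    have hyG : y ∈ G := hGconv hzQ.1 hw (by linarith) ht0.le (by ring)
    have hyi : ∀ i, y i - z₁ i = (z i - z₁ i) * (1 + t * a i) := by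
      intro i
      have : (z i - z₁ i) * ((z i - z₁ i)⁻¹ * (w i - z i)) = w i - z i := by
        rw [← mul_assoc, mul_inv_cancel₀ (hzpos i).ne', one_mul]
      simp only [hydef, hadef, Pi.add_apply, Pi.smul_apply, smul_eq_mul]
      nlinarith [this]
    have hfac : ∀ i, (0:ℝ) < 1 + t * a i := by
      intro i
      have := abs_le.mp (hta i)
      linarith [this.1]
    have hyQ : ∀ i, z₁ i < y i := by
      intro i
      have : 0 < y i - z₁ i := by rw [hyi i]; exact mul_pos (hzpos i) (hfac i)
      linarith
    have hφy : φ y = φ z + ∑ i, Real.log (1 + t * a i) := by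
      rw [hφdef]
      simp only
      rw [← Finset.sum_add_distrib]
      refine Finset.sum_congr rfl fun i _ => ?_
      rw [hyi i, Real.log_mul (hzpos i).ne' (hfac i).ne']
    have hle : φ y ≤ φ z := hmax y ⟨hyG, hyQ⟩
    have hlogs : ∑ i, Real.log (1 + t * a i) ≤ 0 := by linarith [hφy ▸ hle]
    have hterm : ∀ i, t * a i - 2 * (t * a i)^2 ≤ Real.log (1 + t * a i) := by
      intro i
      exact log_lb _ (by linarith [(abs_le.mp (hta i)).1])
    have hsum : ∑ i, (t * a i - 2 * (t * a i)^2) ≤ 0 :=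
      le_trans (Finset.sum_le_sum fun i _ => hterm i) hlogs
    have hre : ∑ i, (t * a i - 2 * (t * a i)^2) = t * S - 2 * t^2 * B := by
      rw [hSdef, hBdef, Finset.mul_sum, Finset.mul_sum, Finset.sum_sub_distrib]
      congr 1
      refine Finset.sum_congr rfl fun i _ => ?_
      ring
    rw [hre] at hsum
    have : t * S ≤ t * (2 * t * B) := by nlinarith
    exact le_of_mul_le_mul_left this ht0
  -- conclude S ≤ 0
  have hS0 : S ≤ 0 := by
    by_contra h
    push_neg at h
    set t : ℝ := min 1 (min (1 / (2 * (A + 1))) (S / (4 * B + 1))) with htdef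
    have ht0 : 0 < t := by
      apply lt_min one_pos
      apply lt_min
      · positivity
      · positivity
    have ht1 : t ≤ 1 := min_le_left _ _
    have htA : t ≤ 1 / (2 * (A + 1)) := le_trans (min_le_right _ _) (min_le_left _ _)
    have htB : t ≤ S / (4 * B + 1) := le_trans (min_le_right _ _) (min_le_right _ _)
    have hta : ∀ i, |t * a i| ≤ 2⁻¹ := by
      intro i
      rw [abs_mul, abs_of_pos ht0]
      calc t * |a i| ≤ (1 / (2 * (A + 1))) * A :=
            mul_le_mul htA (haA i) (abs_nonneg _) (by positivity)
        _ ≤ 2⁻¹ := by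
            rw [div_mul_eq_mul_div, div_le_iff₀ (by positivity : (0:ℝ) < 2 * (A+1))]
            nlinarith
    have hkey := key t ht0 ht1 hta
    have h2tB : 2 * t * B ≤ S / 2 := by
      have : t * (4 * B + 1) ≤ S :=
        (le_div_iff₀ (by positivity)).mp htB
      nlinarith
    linarith
  have : ∑ i, (z i - z₁ i)⁻¹ * w i - ∑ i, (z i - z₁ i)⁻¹ * z i = S := by
    rw [hSdef, ← Finset.sum_sub_distrib]
    exact Finset.sum_congr rfl fun i _ => by rw [hadef]; ring
  linarith
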